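/- Let k ≥ 2 be an integer and let r be a real number with r < 1 − 1/k. For integers i ≥ k+1 define ρ*_{k,i} = (k−1)/((i−1)(i−2)), and for α ∈ [0,1] define f_{k,i}(α) = Σ_{j=k}^{i−1} binom(i−1, j) α^j (1−α)^{i−1−j}. Then there exist an integer b ≥ k+1 and real constants A > 0 and γ > 1 such that, setting ρ_i = ρ*_{k,i} for k+1 ≤ i ≤ b and ρ_k = 1 − Σ_{i=k+1}^b ρ*_{k,i}, the following hold: (i) ρ_k ≥ 0 (so the ρ_i form a probability distribution on {k, …, b}); (ii) 1 − 2·Σ_{i=k}^b ρ_i/i ≥ r; and (iii) the sequence defined by α_0 = 1 and α_{t+1} = Σ_{i=k+1}^b ρ_i f_{k,i}(α_t) satisfies α_t ≤ exp(−A·γ^t) for all integers t ≥ 1. -/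

import Mathlib

/-!
Summing `ρ*_{k,i} f_{k,i}(x)` over `k < i ≤ b` telescopes, by Pascal's rule for binomial tails,
to `x P(Bin(b-2, x) ≥ k-1) - (k-1)/(b-1) P(Bin(b-1, x) ≥ k)`. Hence one step of density evolution
satisfies `α_{t+1} ≤ α_t (1 - (1 - α_t)^(b-2))`, while `α_1 = 1 - (k-1)/(b-1) ≤ 1 - δ` with
`δ = 1/(b-1)`. So the iterates first decrease geometrically with ratio `1 - δ^(b-2)`, and once they
are small, Bernoulli's inequality `α_{t+1} ≤ (b-2) α_t²` makes the decay doubly exponential.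
The design rate telescopes as well, `Σ ρ*_{k,i}/i = 1/(2k) - (k-1)/(2b(b-1))`, so it lies within
`2/(b-1)` of `1 - 1/k`, and a large `b` beats any `r < 1 - 1/k`.
-/

open Finset Real

noncomputable def binomProb (n j : ℕ) (x : ℝ) : ℝ := n.choose j * x ^ j * (1 - x) ^ (n - j)

/-- `P(Bin(n, x) ≥ s)`; the paper's `f_{k,i}` is `binomTail (i - 1) k`. -/
noncomputable def binomTail (n s : ℕ) (x : ℝ) : ℝ := ∑ j ∈ Icc s n, binomProb n j x

section BinomialTail

variable {x : ℝ}

lemma binomProb_nonneg (hx0 : 0 ≤ x) (hx1 : x ≤ 1) (n j : ℕ) : 0 ≤ binomProb n j x := by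
  have : 0 ≤ 1 - x := sub_nonneg.2 hx1
  unfold binomProb; positivity

lemma binomProb_succ_succ (n j : ℕ) (x : ℝ) :
    binomProb (n + 1) (j + 1) x = x * binomProb n j x + (1 - x) * binomProb n (j + 1) x := by
  unfold binomProb
  rcases lt_or_ge j n with hjn | hnj
  · obtain ⟨m, rfl⟩ := Nat.exists_eq_add_of_lt hjn
    rw [Nat.choose_succ_succ', show j + m + 1 + 1 - (j + 1) = m + 1 by omega,
      show j + m + 1 - j = m + 1 by omega, show j + m + 1 - (j + 1) = m by omega]
    push_cast; ring
  · rw [Nat.choose_succ_succ', Nat.choose_eq_zero_of_lt (by omega : n < j + 1),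
      show n + 1 - (j + 1) = n - j by omega]
    push_cast; ring

lemma binomTail_zero (n : ℕ) (x : ℝ) : binomTail n 0 x = 1 := by
  have h := (add_pow x (1 - x) n).symm
  rw [add_sub_cancel, one_pow] at h
  rw [binomTail, ← h, range_eq_Ico, Ico_add_one_right_eq_Icc]
  exact sum_congr rfl fun j _ => by unfold binomProb; ring

lemma binomTail_of_lt {n s : ℕ} (h : n < s) (x : ℝ) : binomTail n s x = 0 := by
  rw [binomTail, Icc_eq_empty_of_lt h, sum_empty]

lemma binomTail_eq_binomProb_add {n s : ℕ} (h : s ≤ n) (x : ℝ) :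
    binomTail n s x = binomProb n s x + binomTail n (s + 1) x := by
  rw [binomTail, binomTail, ← insert_Icc_add_one_left_eq_Icc h, sum_insert (by simp)]

lemma binomTail_succ_succ {n s : ℕ} (h : s ≤ n) (x : ℝ) :
    binomTail (n + 1) (s + 1) x = binomTail n (s + 1) x + x * binomProb n s x := by
  have hshift (m : ℕ) :
      ∑ j ∈ Icc (s + 1) (n + 1), binomProb m j x = ∑ j ∈ Icc s n, binomProb m (j + 1) x := by
    rw [← map_add_right_Icc, sum_map]; rfl
  have htop : ∑ j ∈ Icc (s + 1) (n + 1), binomProb n j x = binomTail n (s + 1) x := by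
    rw [sum_Icc_succ_top (by omega), binomProb, Nat.choose_succ_self]
    simp [binomTail]
  rw [binomTail, hshift]
  simp_rw [binomProb_succ_succ]
  rw [sum_add_distrib, ← mul_sum, ← mul_sum, ← hshift, htop, ← binomTail,
    binomTail_eq_binomProb_add h]
  ring

lemma binomTail_nonneg (hx0 : 0 ≤ x) (hx1 : x ≤ 1) (n s : ℕ) : 0 ≤ binomTail n s x :=
  sum_nonneg fun j _ => binomProb_nonneg hx0 hx1 n j

lemma binomTail_le_one_sub_pow (hx0 : 0 ≤ x) (hx1 : x ≤ 1) (n : ℕ) {s : ℕ} (hs : 1 ≤ s) :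
    binomTail n s x ≤ 1 - (1 - x) ^ n := by
  have hmono : binomTail n s x ≤ binomTail n 1 x :=
    sum_le_sum_of_subset_of_nonneg (Icc_subset_Icc_left hs)
      fun j _ _ => binomProb_nonneg hx0 hx1 n j
  have hsplit := binomTail_eq_binomProb_add (Nat.zero_le n) x
  rw [binomTail_zero, binomProb] at hsplit
  simp only [Nat.choose_zero_right, Nat.cast_one, pow_zero, one_mul, Nat.sub_zero] at hsplit
  linarith

lemma binomTail_one {n s : ℕ} (h : s ≤ n) : binomTail n s 1 = 1 := by
  rw [binomTail, sum_eq_single_of_mem n (mem_Icc.2 ⟨h, le_rfl⟩)]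
  · simp [binomProb]
  · intro j hj hjn
    have : 0 < n - j := by have := (mem_Icc.1 hj).2; omega
    simp [binomProb, zero_pow this.ne']

lemma add_one_mul_binomProb_add_one (n j : ℕ) (x : ℝ) :
    ((j : ℝ) + 1) * binomProb (n + 1) (j + 1) x = ((n : ℝ) + 1) * x * binomProb n j x := by
  have h : ((n : ℝ) + 1) * n.choose j = (n + 1).choose (j + 1) * ((j : ℝ) + 1) := by
    exact_mod_cast Nat.add_one_mul_choose_eq n j
  unfold binomProb
  rw [show n + 1 - (j + 1) = n - j by omega]
  linear_combination x ^ (j + 1) * (1 - x) ^ (n - j) * h.symm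

end BinomialTail

noncomputable def rhoStar (k i : ℕ) : ℝ := ((k : ℝ) - 1) / (((i : ℝ) - 1) * ((i : ℝ) - 2))

noncomputable def densityEvolutionStep (k b : ℕ) (x : ℝ) : ℝ :=
  ∑ i ∈ Icc (k + 1) b, rhoStar k i * binomTail (i - 1) k x

section DegreeDistribution

variable {k b : ℕ}

lemma rhoStar_nonneg (hk : 1 ≤ k) {i : ℕ} (hi : k + 1 ≤ i) : 0 ≤ rhoStar k i := by
  have hk' : (1 : ℝ) ≤ k := by exact_mod_cast hk
  have hi' : (k : ℝ) + 1 ≤ i := by exact_mod_cast hi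
  unfold rhoStar
  exact div_nonneg (by linarith) (mul_nonneg (by linarith) (by linarith))

lemma sum_rhoStar (hk : 2 ≤ k) (hkb : k ≤ b) :
    ∑ i ∈ Icc (k + 1) b, rhoStar k i = 1 - ((k : ℝ) - 1) / ((b : ℝ) - 1) := by
  have hk' : (2 : ℝ) ≤ k := by exact_mod_cast hk
  induction b, hkb using Nat.le_induction with
  | base =>
    rw [Icc_eq_empty (by omega), sum_empty, div_self (by linarith), sub_self]
  | succ b hkb ih =>
    have hb : (2 : ℝ) ≤ b := hk'.trans (by exact_mod_cast hkb)
    rw [sum_Icc_succ_top (by omega), ih, rhoStar]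
    push_cast
    rw [show (b : ℝ) + 1 - 1 = b by ring, show (b : ℝ) + 1 - 2 = b - 1 by ring]
    field_simp [show (b : ℝ) - 1 ≠ 0 by linarith, show (b : ℝ) ≠ 0 by linarith]
    ring

lemma sum_rhoStar_div (hk : 2 ≤ k) (hkb : k ≤ b) :
    ∑ i ∈ Icc (k + 1) b, rhoStar k i / i
      = 1 / (2 * (k : ℝ)) - ((k : ℝ) - 1) / (2 * (b : ℝ) * ((b : ℝ) - 1)) := by
  have hk' : (2 : ℝ) ≤ k := by exact_mod_cast hk
  induction b, hkb using Nat.le_induction with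
  | base =>
    rw [Icc_eq_empty (by omega), sum_empty]
    field_simp [show (k : ℝ) - 1 ≠ 0 by linarith, show (k : ℝ) ≠ 0 by linarith]
    ring
  | succ b hkb ih =>
    have hb : (2 : ℝ) ≤ b := hk'.trans (by exact_mod_cast hkb)
    rw [sum_Icc_succ_top (by omega), ih, rhoStar]
    push_cast
    rw [show (b : ℝ) + 1 - 1 = b by ring, show (b : ℝ) + 1 - 2 = b - 1 by ring]
    field_simp [show (b : ℝ) - 1 ≠ 0 by linarith, show (b : ℝ) ≠ 0 by linarith,
      show (b : ℝ) + 1 ≠ 0 by linarith]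
    ring

lemma densityEvolutionStep_eq (hk : 2 ≤ k) (hkb : k + 1 ≤ b) (x : ℝ) :
    densityEvolutionStep k b x
      = x * binomTail (b - 2) (k - 1) x
        - ((k : ℝ) - 1) / ((b : ℝ) - 1) * binomTail (b - 1) k x := by
  obtain ⟨j, rfl⟩ : ∃ j, k = j + 2 := ⟨k - 2, by omega⟩
  obtain ⟨n, rfl⟩ : ∃ n, b = n + 2 := ⟨b - 2, by omega⟩
  simp only [densityEvolutionStep, Nat.add_sub_cancel, Nat.add_one_sub_one]
  push_cast
  rw [show (j : ℝ) + 2 - 1 = j + 1 by ring, show (n : ℝ) + 2 - 1 = n + 1 by ring]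
  have hjn : j ≤ n := by omega
  clear hk hkb
  induction n, hjn using Nat.le_induction with
  | base =>
    rw [Icc_eq_empty (by omega), sum_empty, binomTail_of_lt (by omega),
      binomTail_of_lt (by omega)]
    ring
  | succ n hjn ih =>
    rw [sum_Icc_succ_top (by omega), ih, rhoStar, Nat.add_sub_cancel,
      binomTail_succ_succ (s := j) hjn, binomTail_succ_succ (n := n + 1) (s := j + 1) (by omega)]
    have hP := add_one_mul_binomProb_add_one n j x
    push_cast
    rw [show (j : ℝ) + 2 - 1 = j + 1 by ring, show (n : ℝ) + 2 + 1 - 1 = n + 2 by ring,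
      show (n : ℝ) + 2 + 1 - 2 = n + 1 by ring, show (n : ℝ) + 1 + 1 = n + 2 by ring]
    field_simp
    linear_combination (n + 2) * x * hP

lemma densityEvolutionStep_nonneg (hk : 1 ≤ k) {x : ℝ} (hx0 : 0 ≤ x) (hx1 : x ≤ 1) :
    0 ≤ densityEvolutionStep k b x :=
  sum_nonneg fun _ hi =>
    mul_nonneg (rhoStar_nonneg hk (mem_Icc.1 hi).1) (binomTail_nonneg hx0 hx1 _ _)

lemma densityEvolutionStep_le (hk : 2 ≤ k) (hkb : k + 1 ≤ b) {x : ℝ} (hx0 : 0 ≤ x) (hx1 : x ≤ 1) :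
    densityEvolutionStep k b x ≤ x * (1 - (1 - x) ^ (b - 2)) := by
  have hk' : (2 : ℝ) ≤ k := by exact_mod_cast hk
  have hb' : (k : ℝ) + 1 ≤ b := by exact_mod_cast hkb
  rw [densityEvolutionStep_eq hk hkb]
  have hdrop : 0 ≤ ((k : ℝ) - 1) / ((b : ℝ) - 1) * binomTail (b - 1) k x :=
    mul_nonneg (div_nonneg (by linarith) (by linarith)) (binomTail_nonneg hx0 hx1 _ _)
  have htail := binomTail_le_one_sub_pow hx0 hx1 (b - 2) (show 1 ≤ k - 1 by omega)
  nlinarith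

lemma densityEvolutionStep_one (hk : 2 ≤ k) (hkb : k ≤ b) :
    densityEvolutionStep k b 1 = 1 - ((k : ℝ) - 1) / ((b : ℝ) - 1) := by
  rw [← sum_rhoStar hk hkb, densityEvolutionStep]
  refine sum_congr rfl fun i hi => ?_
  rw [binomTail_one (by have := (mem_Icc.1 hi).1; omega), mul_one]

lemma le_one_sub_two_mul_sum_div (hk : 2 ≤ k) (hkb : k + 1 ≤ b) {ρ : ℕ → ℝ}
    (hρ : ∀ i, k + 1 ≤ i → i ≤ b → ρ i = rhoStar k i) (hρk : ρ k = ((k : ℝ) - 1) / ((b : ℝ) - 1)) :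
    1 - 1 / (k : ℝ) - 2 / ((b : ℝ) - 1) ≤ 1 - 2 * ∑ i ∈ Icc k b, ρ i / i := by
  have hk' : (2 : ℝ) ≤ k := by exact_mod_cast hk
  have hb' : (k : ℝ) + 1 ≤ b := by exact_mod_cast hkb
  rw [← insert_Icc_add_one_left_eq_Icc (by omega : k ≤ b), sum_insert (by simp),
    sum_congr rfl fun i hi => by rw [hρ i (mem_Icc.1 hi).1 (mem_Icc.1 hi).2],
    sum_rhoStar_div hk (by omega), hρk]
  have hhead : ((k : ℝ) - 1) / ((b : ℝ) - 1) / k ≤ 1 / ((b : ℝ) - 1) := by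
    rw [div_div, div_le_div_iff₀ (by nlinarith) (by linarith)]
    nlinarith
  have htail : 0 ≤ ((k : ℝ) - 1) / (2 * (b : ℝ) * ((b : ℝ) - 1)) :=
    div_nonneg (by linarith) (by nlinarith)
  have hk2 : 2 * (1 / (2 * (k : ℝ))) = 1 / k := by field_simp
  rw [div_eq_mul_one_div 2 ((b : ℝ) - 1)]
  linarith

end DegreeDistribution

lemma le_exp_neg_mul_two_pow_of_le_sq {β : ℕ → ℝ} {μ : ℝ} (hβ : ∀ s, 0 ≤ β s)
    (h0 : β 0 ≤ exp (-μ)) (hsq : ∀ s, β (s + 1) ≤ β s ^ 2) (s : ℕ) :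
    β s ≤ exp (-μ * 2 ^ s) := by
  induction s with
  | zero => simpa using h0
  | succ s ih =>
    calc β (s + 1) ≤ β s ^ 2 := hsq s
      _ ≤ exp (-μ * 2 ^ s) ^ 2 := pow_le_pow_left₀ (hβ s) ih 2
      _ = exp (-μ * 2 ^ (s + 1)) := by rw [← exp_nat_mul]; ring_nf

lemma mul_one_sub_one_sub_pow_le {x : ℝ} (hx0 : 0 ≤ x) (hx2 : x ≤ 2) (n : ℕ) :
    x * (1 - (1 - x) ^ n) ≤ n * x ^ 2 := by
  have hbern := one_add_mul_le_pow (show -2 ≤ -x by linarith) n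
  rw [mul_neg, ← sub_eq_add_neg, ← sub_eq_add_neg] at hbern
  nlinarith

lemma le_geometric_of_le_mul_one_sub_pow {a : ℕ → ℝ} {δ : ℝ} {n : ℕ} (hδ0 : 0 ≤ δ) (hδ1 : δ ≤ 1)
    (ha0 : ∀ t, 0 ≤ a t) (ha1 : a 1 ≤ 1 - δ) (hstep : ∀ t, a (t + 1) ≤ a t * (1 - (1 - a t) ^ n))
    (s : ℕ) : a (s + 1) ≤ (1 - δ ^ n) ^ s * (1 - δ) := by
  have hc0 : 0 ≤ 1 - δ ^ n := sub_nonneg.2 (pow_le_one₀ hδ0 hδ1)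
  have hc1 : 1 - δ ^ n ≤ 1 := sub_le_self 1 (pow_nonneg hδ0 n)
  induction s with
  | zero => simpa using ha1
  | succ s ih =>
    have hδa : δ ≤ 1 - a (s + 1) := by nlinarith [pow_le_one₀ hc0 hc1 (n := s)]
    have := pow_le_pow_left₀ hδ0 hδa n
    calc a (s + 1 + 1) ≤ a (s + 1) * (1 - δ ^ n) := by
          refine (hstep _).trans (mul_le_mul_of_nonneg_left ?_ (ha0 _)); linarith
      _ ≤ (1 - δ ^ n) ^ s * (1 - δ) * (1 - δ ^ n) := mul_le_mul_of_nonneg_right ih hc0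
      _ = (1 - δ ^ n) ^ (s + 1) * (1 - δ) := by ring

lemma le_exp_neg_mul_two_pow_of_le_of_le_exp {a : ℕ → ℝ} {δ K : ℝ} {T : ℕ} (hδ0 : 0 < δ)
    (hδ1 : δ ≤ 1) (hK : 1 ≤ K) (ha0 : ∀ t, 0 ≤ a t) (hearly : ∀ t, 1 ≤ t → a t ≤ 1 - δ)
    (hlate : ∀ s, K * a (T + 1 + s) ≤ exp (-1 * 2 ^ s)) (t : ℕ) (ht : 1 ≤ t) :
    a t ≤ exp (-(δ / 2 ^ (T + 1)) * 2 ^ t) := by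
  rcases le_or_gt t T with htT | hTt
  · have h2 : δ / 2 ^ (T + 1) * 2 ^ t ≤ δ := by
      rw [div_mul_eq_mul_div, div_le_iff₀ (by positivity)]
      exact mul_le_mul_of_nonneg_left (pow_le_pow_right₀ one_le_two (by omega)) hδ0.le
    calc a t ≤ 1 - δ := hearly t ht
      _ ≤ exp (-δ) := by linarith [add_one_le_exp (-δ)]
      _ ≤ exp (-(δ / 2 ^ (T + 1)) * 2 ^ t) := exp_le_exp.2 (by linarith)
  · obtain ⟨s, rfl⟩ := Nat.exists_eq_add_of_le (show T + 1 ≤ t by omega)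
    have h2 : δ / 2 ^ (T + 1) * 2 ^ (T + 1 + s) = δ * 2 ^ s := by
      rw [pow_add]; field_simp; ring
    calc a (T + 1 + s) ≤ K * a (T + 1 + s) := le_mul_of_one_le_left (ha0 _) hK
      _ ≤ exp (-1 * 2 ^ s) := hlate s
      _ ≤ exp (-(δ / 2 ^ (T + 1)) * 2 ^ (T + 1 + s)) := by
        rw [neg_mul, neg_mul, h2]
        exact exp_le_exp.2 (neg_le_neg (by nlinarith [pow_pos (two_pos : (0 : ℝ) < 2) s]))

lemma exists_forall_le_exp_neg_mul_two_pow (n : ℕ) {δ : ℝ} (hδ0 : 0 < δ) (hδ1 : δ ≤ 1) :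
    ∃ A > 0, ∀ a : ℕ → ℝ, (∀ t, 0 ≤ a t) → a 1 ≤ 1 - δ →
      (∀ t, a (t + 1) ≤ a t * (1 - (1 - a t) ^ n)) → ∀ t, 1 ≤ t → a t ≤ exp (-A * 2 ^ t) := by
  set c := 1 - δ ^ n
  have hc0 : 0 ≤ c := sub_nonneg.2 (pow_le_one₀ hδ0.le hδ1)
  have hc1 : c < 1 := sub_lt_self 1 (pow_pos hδ0 n)
  have hK : (1 : ℝ) ≤ n + 1 := by simp
  obtain ⟨T, hT⟩ :=
    exists_pow_lt_of_lt_one (div_pos (exp_pos (-1)) (by linarith : (0 : ℝ) < n + 1)) hc1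
  rw [lt_div_iff₀' (by linarith)] at hT
  refine ⟨δ / 2 ^ (T + 1), by positivity, fun a ha0 ha1 hstep => ?_⟩
  have hgeom := le_geometric_of_le_mul_one_sub_pow hδ0.le hδ1 ha0 ha1 hstep
  have hearly (t : ℕ) (ht : 1 ≤ t) : a t ≤ 1 - δ := by
    obtain ⟨s, rfl⟩ := Nat.exists_eq_add_of_le' ht
    exact (hgeom s).trans (mul_le_of_le_one_left (by linarith) (pow_le_one₀ hc0 hc1.le))
  -- `(n + 1) a_t` squares at each step, and the geometric phase makes it `≤ e⁻¹` at `t = T + 1`.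
  have hsq (t : ℕ) (ht : 1 ≤ t) : (n + 1) * a (t + 1) ≤ ((n + 1) * a t) ^ 2 := by
    have hquad := (hstep t).trans (mul_one_sub_one_sub_pow_le (ha0 t) (by linarith [hearly t ht]) n)
    nlinarith [ha0 t]
  refine le_exp_neg_mul_two_pow_of_le_of_le_exp hδ0 hδ1 hK ha0 hearly ?_
  refine le_exp_neg_mul_two_pow_of_le_sq (fun s => by have := ha0 (T + 1 + s); positivity) ?_
    fun s => hsq (T + 1 + s) (by omega)
  calc (n + 1) * a (T + 1) ≤ (n + 1) * c ^ T := by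
        refine mul_le_mul_of_nonneg_left ((hgeom T).trans ?_) (by linarith)
        nlinarith [pow_nonneg hc0 T]
    _ ≤ exp (-1) := hT.le

lemma exists_densityEvolution_le_exp {k b : ℕ} (hk : 2 ≤ k) (hkb : k + 1 ≤ b) :
    ∃ A > 0, ∀ α : ℕ → ℝ, α 0 = 1 → (∀ t, α (t + 1) = densityEvolutionStep k b (α t)) →
      ∀ t, 1 ≤ t → α t ≤ exp (-A * 2 ^ t) := by
  have hk' : (2 : ℝ) ≤ k := by exact_mod_cast hk
  have hbk : (k : ℝ) + 1 ≤ b := by exact_mod_cast hkb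
  obtain ⟨A, hA, hdecay⟩ := exists_forall_le_exp_neg_mul_two_pow (b - 2)
    (δ := 1 / ((b : ℝ) - 1)) (div_pos one_pos (by linarith))
    (by rw [div_le_one (by linarith)]; linarith)
  refine ⟨A, hA, fun α hα0 hstep => ?_⟩
  have hunit (t : ℕ) : 0 ≤ α t ∧ α t ≤ 1 := by
    induction t with
    | zero => simp [hα0]
    | succ t ih =>
      rw [hstep t]
      refine ⟨densityEvolutionStep_nonneg (by omega) ih.1 ih.2,
        (densityEvolutionStep_le hk hkb ih.1 ih.2).trans ?_⟩
      have : 0 ≤ (1 - α t) ^ (b - 2) := pow_nonneg (by linarith [ih.2]) _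
      nlinarith [ih.1, ih.2]
  refine hdecay α (fun t => (hunit t).1) ?_
    fun t => (hstep t).symm ▸ densityEvolutionStep_le hk hkb (hunit t).1 (hunit t).2
  rw [hstep 0, hα0, densityEvolutionStep_one hk (by omega)]
  gcongr <;> linarith

lemma exists_ge_two_div_sub_one_le (m : ℕ) {ε : ℝ} (hε : 0 < ε) :
    ∃ b ≥ m, 2 / ((b : ℝ) - 1) ≤ ε := by
  obtain ⟨N, hN⟩ := exists_nat_gt (2 / ε + 1)
  refine ⟨max N m, le_max_right N m, ?_⟩
  have hNb : (N : ℝ) ≤ max N m := by exact_mod_cast le_max_left N m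
  have h2ε : 0 < 2 / ε := div_pos two_pos hε
  have := (div_lt_iff₀ hε).1 (show 2 / ε < (max N m : ℕ) - 1 by push_cast at hNb ⊢; linarith)
  rw [div_le_iff₀ (by push_cast at hNb ⊢; linarith)]
  linarith

/-- Lemma 3 (Capacity Achieving Degree Distributions for Rescaled Density
Evolution), scalar form: for `k ≥ 2` and `r < 1 - 1/k` there exist `b ≥ k+1`,
`A > 0`, `γ > 1` such that the truncated degree distribution
`ρ_i = ρ*_{k,i} = (k-1)/((i-1)(i-2))` for `k+1 ≤ i ≤ b`,
`ρ_k = 1 - Σ_{i=k+1}^b ρ*_{k,i}` is a probability distribution with design rate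
`1 - 2 Σ_i ρ_i/i ≥ r`, and the density-evolution recursion `α_0 = 1`,
`α_{t+1} = Σ_{i=k+1}^b ρ_i f_{k,i}(α_t)` satisfies `α_t ≤ exp(-A γ^t)`. -/
theorem stmt_12 (k : ℕ) (hk : 2 ≤ k) (r : ℝ) (hr : r < 1 - 1 / (k : ℝ)) :
    ∃ (b : ℕ) (A γ : ℝ), k + 1 ≤ b ∧ 0 < A ∧ 1 < γ ∧
      ∀ ρ : ℕ → ℝ,
        (∀ i, k + 1 ≤ i → i ≤ b → ρ i = ((k : ℝ) - 1) / (((i : ℝ) - 1) * ((i : ℝ) - 2))) →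
        ρ k = 1 - ∑ i ∈ Finset.Icc (k + 1) b,
            ((k : ℝ) - 1) / (((i : ℝ) - 1) * ((i : ℝ) - 2)) →
        (0 ≤ ρ k ∧
         1 - 2 * ∑ i ∈ Finset.Icc k b, ρ i / (i : ℝ) ≥ r ∧
         ∀ α : ℕ → ℝ, α 0 = 1 →
           (∀ t, α (t + 1) = ∑ i ∈ Finset.Icc (k + 1) b, ρ i *
               ∑ j ∈ Finset.Icc k (i - 1),
                 ((i - 1).choose j : ℝ) * (α t) ^ j * (1 - α t) ^ (i - 1 - j)) →
           ∀ t : ℕ, 1 ≤ t → α t ≤ Real.exp (-A * γ ^ t)) := by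
  obtain ⟨b, hkb, hrate⟩ := exists_ge_two_div_sub_one_le (k + 1) (sub_pos.2 hr)
  obtain ⟨A, hA, hdecay⟩ := exists_densityEvolution_le_exp hk hkb
  refine ⟨b, A, 2, hkb, hA, one_lt_two, fun ρ hρ hρk => ?_⟩
  have hρk' : ρ k = ((k : ℝ) - 1) / ((b : ℝ) - 1) := by
    have hsum := sum_rhoStar hk (by omega : k ≤ b)
    unfold rhoStar at hsum
    rw [hρk, hsum, sub_sub_cancel]
  have hk' : (2 : ℝ) ≤ k := by exact_mod_cast hk
  have hkb' : (k : ℝ) + 1 ≤ b := by exact_mod_cast hkb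
  refine ⟨hρk' ▸ div_nonneg (by linarith) (by linarith),
    le_trans (by linarith) (le_one_sub_two_mul_sum_div hk hkb hρ hρk'),
    fun α hα0 hα => hdecay α hα0 fun t => ?_⟩
  rw [hα t]
  exact sum_congr rfl fun i hi => by rw [hρ i (mem_Icc.1 hi).1 (mem_Icc.1 hi).2]; rfl
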